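/- arXiv:2206.08204 — 6 statements merged into one kernel-verified Lean document; each statement's English description precedes it below -/
import Mathlib

section
/- If S₁ and S₂ are separable sets with respect to a value function ν on a finite feature set F, then their union S₁ ∪ S₂ is also a separable set with respect to ν. -/
/-- `S` is separable with respect to the value function `ν` on feature set `F`. -/
def Separable {α : Type*} [DecidableEq α] (F : Finset α) (ν : Finset α → ℝ)
    (S : Finset α) : Prop :=
  ∀ T ⊆ F, ν T = ν (T ∩ S) + ν (T \ S)

theorem separable_union {α : Type*} [DecidableEq α] (F : Finset α)
    (ν : Finset α → ℝ) (S₁ S₂ : Finset α) (h₁ : S₁ ⊆ F) (h₂ : S₂ ⊆ F)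
    (hsep₁ : Separable F ν S₁) (hsep₂ : Separable F ν S₂) :
    Separable F ν (S₁ ∪ S₂) := by
  intro T hT
  have hA := hsep₁ T hT
  have hB := hsep₂ (T \ S₁) ((Finset.sdiff_subset).trans hT)
  have hC := hsep₁ (T ∩ (S₁ ∪ S₂)) ((Finset.inter_subset_left).trans hT)
  have e1 : T ∩ (S₁ ∪ S₂) ∩ S₁ = T ∩ S₁ := by
    ext x; simp [Finset.mem_inter, Finset.mem_union]
  have e2 : (T ∩ (S₁ ∪ S₂)) \ S₁ = (T \ S₁) ∩ S₂ := by
    ext x; simp [Finset.mem_inter, Finset.mem_union, Finset.mem_sdiff]; tauto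
  have e3 : T \ (S₁ ∪ S₂) = (T \ S₁) \ S₂ := by
    ext x; simp [Finset.mem_union, Finset.mem_sdiff]; tauto
  rw [e1, e2] at hC
  rw [e3, hC, hA, hB]
  ring
end

section
/- If S₁ and S₂ are separable sets with respect to a value function ν on a finite feature set F, then their intersection S₁ ∩ S₂ is also a separable set with respect to ν. -/
theorem separable_inter {α : Type*} [DecidableEq α] (F : Finset α)
    (ν : Finset α → ℝ) (S₁ S₂ : Finset α) (h₁ : S₁ ⊆ F) (h₂ : S₂ ⊆ F)
    (hsep₁ : Separable F ν S₁) (hsep₂ : Separable F ν S₂) :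
    Separable F ν (S₁ ∩ S₂) := by
  intro T hT
  have e1 := hsep₁ T hT
  have e2 := hsep₂ (T ∩ S₁) ((Finset.inter_subset_left).trans hT)
  have e3 := hsep₁ (T \ (S₁ ∩ S₂)) ((Finset.sdiff_subset).trans hT)
  have id1 : T ∩ S₁ ∩ S₂ = T ∩ (S₁ ∩ S₂) := by
    ext x; simp [Finset.mem_inter, and_assoc]
  have id2 : (T \ (S₁ ∩ S₂)) ∩ S₁ = (T ∩ S₁) \ S₂ := by
    ext x; simp [Finset.mem_inter, Finset.mem_sdiff]; tauto
  have id3 : (T \ (S₁ ∩ S₂)) \ S₁ = T \ S₁ := by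
    ext x; simp [Finset.mem_sdiff]; tauto
  rw [id1] at e2
  rw [id2, id3] at e3
  linarith
end

section
/- For features f₁, f₂ ∈ F, let S_{f₁} and S_{f₂} denote the intersections of all separable sets containing f₁ and f₂ respectively. Then either S_{f₁} ∩ S_{f₂} = ∅ or S_{f₁} = S_{f₂}. -/
lemma separable_compl {α : Type*} [DecidableEq α] {F S : Finset α} {ν : Finset α → ℝ}
    (hS : Separable F ν S) : Separable F ν (F \ S) := by
  intro T hT
  have h1 : T ∩ (F \ S) = T \ S := by
    ext a
    simp only [Finset.mem_inter, Finset.mem_sdiff]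
    exact ⟨fun h => ⟨h.1, h.2.2⟩, fun h => ⟨h.1, hT h.1, h.2⟩⟩
  have h2 : T \ (F \ S) = T ∩ S := by
    ext a
    simp only [Finset.mem_inter, Finset.mem_sdiff, not_and, not_not]
    exact ⟨fun h => ⟨h.1, h.2 (hT h.1)⟩, fun h => ⟨h.1, fun _ => h.2⟩⟩
  rw [h1, h2, add_comm]
  exact hS T hT

/-- For two features, the intersections of all separable sets containing them
are either disjoint or identical. -/
theorem sf_disjoint_or_eq {α : Type*} [DecidableEq α]
    (F : Finset α) (ν : Finset α → ℝ) (f₁ f₂ : α) (hf₁ : f₁ ∈ F) (hf₂ : f₂ ∈ F)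
    (Sf₁ Sf₂ : Finset α)
    (hSf₁ : ∀ x, x ∈ Sf₁ ↔ ∀ S ⊆ F, Separable F ν S → f₁ ∈ S → x ∈ S)
    (hSf₂ : ∀ x, x ∈ Sf₂ ↔ ∀ S ⊆ F, Separable F ν S → f₂ ∈ S → x ∈ S) :
    Sf₁ ∩ Sf₂ = ∅ ∨ Sf₁ = Sf₂ := by
  by_cases hne : Sf₁ ∩ Sf₂ = ∅
  · exact Or.inl hne
  · right
    obtain ⟨x, hx⟩ := Finset.nonempty_iff_ne_empty.2 hne
    rw [Finset.mem_inter] at hx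
    obtain ⟨hx1, hx2⟩ := hx
    -- For any separable S ⊆ F, f₁ ∈ S ↔ f₂ ∈ S
    have key : ∀ S ⊆ F, Separable F ν S → (f₁ ∈ S ↔ f₂ ∈ S) := by
      intro S hSF hsep
      constructor
      · intro h1
        by_contra h2
        have hcomp : f₂ ∈ F \ S := Finset.mem_sdiff.2 ⟨hf₂, h2⟩
        have hxS : x ∈ S := (hSf₁ x).1 hx1 S hSF hsep h1
        have hxC : x ∈ F \ S :=
          (hSf₂ x).1 hx2 (F \ S) (Finset.sdiff_subset) (separable_compl hsep) hcomp
        exact (Finset.mem_sdiff.1 hxC).2 hxS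
      · intro h2
        by_contra h1
        have hcomp : f₁ ∈ F \ S := Finset.mem_sdiff.2 ⟨hf₁, h1⟩
        have hxS : x ∈ S := (hSf₂ x).1 hx2 S hSF hsep h2
        have hxC : x ∈ F \ S :=
          (hSf₁ x).1 hx1 (F \ S) (Finset.sdiff_subset) (separable_compl hsep) hcomp
        exact (Finset.mem_sdiff.1 hxC).2 hxS
    ext y
    rw [hSf₁, hSf₂]
    constructor
    · intro h S hSF hsep hf
      exact h S hSF hsep ((key S hSF hsep).2 hf)
    · intro h S hSF hsep hf
      exact h S hSF hsep ((key S hSF hsep).1 hf)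
end

section
/- Any partition of F into separable sets with respect to ν that has the property that every separable set is a union of its blocks is unique. -/
/-- `G` is a partition of `F` into (nonempty) separable sets. -/
def IsSepPartition {α : Type*} [DecidableEq α] (F : Finset α) (ν : Finset α → ℝ)
    (G : Finset (Finset α)) : Prop :=
  (∀ g ∈ G, g.Nonempty ∧ Separable F ν g) ∧
  (∀ g ∈ G, ∀ g' ∈ G, g ≠ g' → Disjoint g g') ∧
  G.sup id = F

lemma sep_partition_subset {α : Type*} [DecidableEq α]
    (F : Finset α) (ν : Finset α → ℝ) (G₁ G₂ : Finset (Finset α))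
    (hG₁ : IsSepPartition F ν G₁) (hG₂ : IsSepPartition F ν G₂)
    (hmax₁ : ∀ S ⊆ F, Separable F ν S → ∃ H ⊆ G₁, S = H.sup id)
    (hmax₂ : ∀ S ⊆ F, Separable F ν S → ∃ H ⊆ G₂, S = H.sup id) :
    G₁ ⊆ G₂ := by
  intro g hg
  obtain ⟨hne, hsep⟩ := hG₁.1 g hg
  have hgF : g ⊆ F := hG₁.2.2 ▸ Finset.le_sup (f := id) hg
  obtain ⟨H, hHG₂, hgH⟩ := hmax₂ g hgF hsep
  obtain ⟨x, hx⟩ := hne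
  obtain ⟨g', hg'H, hxg'⟩ := Finset.mem_sup.1 (hgH ▸ hx : x ∈ H.sup id)
  have hg'G₂ := hHG₂ hg'H
  have hg'g : g' ⊆ g := hgH ▸ Finset.le_sup (f := id) hg'H
  have hg'F : g' ⊆ F := hG₂.2.2 ▸ Finset.le_sup (f := id) hg'G₂
  obtain ⟨_, hsep'⟩ := hG₂.1 g' hg'G₂
  obtain ⟨H', hH'G₁, hg'H'⟩ := hmax₁ g' hg'F hsep'
  obtain ⟨g'', hg''H', hxg''⟩ := Finset.mem_sup.1 (hg'H' ▸ hxg' : x ∈ H'.sup id)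
  have hg''G₁ := hH'G₁ hg''H'
  have hg''g' : g'' ⊆ g' := hg'H' ▸ Finset.le_sup (f := id) hg''H'
  have heq : g'' = g := by
    by_contra h
    exact Finset.disjoint_left.1 (hG₁.2.1 g'' hg''G₁ g hg h) hxg'' hx
  have : g = g' := Finset.Subset.antisymm (heq ▸ hg''g') hg'g
  exact this ▸ hg'G₂

/-- A partition of `F` into separable sets in which every separable set is a union
of blocks is unique. -/
theorem maximal_separable_partition_unique {α : Type*} [DecidableEq α]
    (F : Finset α) (ν : Finset α → ℝ) (G₁ G₂ : Finset (Finset α))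
    (hG₁ : IsSepPartition F ν G₁) (hG₂ : IsSepPartition F ν G₂)
    (hmax₁ : ∀ S ⊆ F, Separable F ν S → ∃ H ⊆ G₁, S = H.sup id)
    (hmax₂ : ∀ S ⊆ F, Separable F ν S → ∃ H ⊆ G₂, S = H.sup id) :
    G₁ = G₂ := by
  exact Finset.Subset.antisymm
    (sep_partition_subset F ν G₁ G₂ hG₁ hG₂ hmax₁ hmax₂)
    (sep_partition_subset F ν G₂ G₁ hG₂ hG₁ hmax₂ hmax₁)
end

section
/- Suppose (φ, ν) is local-global consistent (value and importance consistency hold for all instance distributions). Then the global importance function φ_g is affine-linear on value functions: for all α ∈ [0,1] and value functions ν₁, ν₂ arising as instance value functions, φ_g(α·ν₁ + (1−α)·ν₂) = α·φ_g(ν₁) + (1−α)·φ_g(ν₂). -/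
/-- Under local-global consistency (for every finitely supported instance
distribution), the global importance function is affine-linear on convex
combinations of instance value functions. -/
theorem global_importance_linear {α X : Type*} [DecidableEq α]
    (νx : X → (Finset α → ℝ))
    (φl φg : (Finset α → ℝ) → α → ℝ)
    (hcons : ∀ (s : Finset X) (p : X → ℝ),
      (∀ x ∈ s, 0 ≤ p x) → (∑ x ∈ s, p x) = 1 →
      ∀ f : α,
        (∑ x ∈ s, p x * φl (νx x) f) =
          φg (fun S => ∑ x ∈ s, p x * νx x S) f) :
    ∀ (a : ℝ), 0 ≤ a → a ≤ 1 → ∀ (x₁ x₂ : X) (f : α),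
      φg (fun S => a * νx x₁ S + (1 - a) * νx x₂ S) f =
        a * φg (νx x₁) f + (1 - a) * φg (νx x₂) f := by
  classical
  intro a ha0 ha1 x₁ x₂ f
  -- singleton case: φg (νx x) = φl (νx x)
  have hsingle : ∀ x : X, φg (νx x) f = φl (νx x) f := by
    intro x
    have := hcons {x} (fun _ => 1) (by intro _ _; norm_num) (by simp) f
    simp at this
    have h2 : (fun S => νx x S) = νx x := rfl
    rw [h2] at this
    exact this.symm
  by_cases hxx : x₁ = x₂
  · subst hxx
    have hfun : (fun S => a * νx x₁ S + (1 - a) * νx x₁ S) = νx x₁ := by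
      funext S; ring
    rw [hfun]; ring
  · have := hcons {x₁, x₂} (fun x => if x = x₁ then a else 1 - a)
      (by intro x hx
          by_cases h : x = x₁ <;> simp [h] <;> linarith)
      (by rw [Finset.sum_insert (by simp [hxx])]; simp [Ne.symm hxx])
      f
    rw [Finset.sum_insert (by simp [hxx]), Finset.sum_singleton] at this
    simp only [if_pos rfl, if_neg (Ne.symm hxx)] at this
    have hfun : (fun S => ∑ x ∈ ({x₁, x₂} : Finset X),
        (if x = x₁ then a else 1 - a) * νx x S)
        = (fun S => a * νx x₁ S + (1 - a) * νx x₂ S) := by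
      funext S
      rw [Finset.sum_insert (by simp [hxx]), Finset.sum_singleton]
      simp [Ne.symm hxx]
    rw [hfun] at this
    rw [← this, hsingle x₁, hsingle x₂]; simp
end

section
/- There is no feature importance function satisfying simultaneously Triviality, the Null Feature property, and Data-Model Equivalence, unless the value function is identically zero. Formally: consider two features f₀, f₁ that are identical (f₀ = f₁ = ρ) and two perfect models M⁰, M¹ with Mⁱ(x) = f_i(x). If Data-Model Equivalence forces φ(ν^{M⁰}, f) = φ(ν^{M¹}, f) for all f, Null Feature forces φ(ν^{Mⁱ}, f_{1−i}) = 0, and Triviality forces φ(ν^{Mⁱ}, f_i) ≠ 0 whenever ν^{Mⁱ} ≢ 0, then ν^{M⁰} ≡ 0 and ν^{M¹} ≡ 0. -/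
/-- Data-model inconsistency: with two identical features and two perfect models
`M⁰, M¹` (each depending only on one feature), if Triviality, the Null Feature
property and Data-Model Equivalence all hold, then both value functions are
identically zero. -/
theorem data_model_inconsistency
    (ν₀ ν₁ : Finset (Fin 2) → ℝ)
    (φ : (Finset (Fin 2) → ℝ) → Fin 2 → ℝ)
    -- Triviality, item 1, for both models' value functions:
    (htriv₀ : ∀ S : Finset (Fin 2), ν₀ S ≠ 0 → ∃ f ∈ S, φ ν₀ f ≠ 0)
    (htriv₁ : ∀ S : Finset (Fin 2), ν₁ S ≠ 0 → ∃ f ∈ S, φ ν₁ f ≠ 0)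
    -- Null Feature: `Mⁱ` ignores feature `f₍₁₋ᵢ₎`:
    (hnull₀ : φ ν₀ 1 = 0) (hnull₁ : φ ν₁ 0 = 0)
    -- Data-Model Equivalence: both models perfectly predict the data,
    -- so their importance vectors agree:
    (hdme : ∀ f : Fin 2, φ ν₀ f = φ ν₁ f) :
    (∀ S, ν₀ S = 0) ∧ (∀ S, ν₁ S = 0) := by
  have h0 : φ ν₀ 0 = 0 := (hdme 0).trans hnull₁
  have h1 : φ ν₁ 1 = 0 := (hdme 1).symm.trans hnull₀
  constructor
  · intro S
    by_contra h
    obtain ⟨f, _, hf⟩ := htriv₀ S h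
    fin_cases f <;> simp_all
  · intro S
    by_contra h
    obtain ⟨f, _, hf⟩ := htriv₁ S h
    fin_cases f <;> simp_all
end
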